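/- arXiv:2512.22961 — 2 statements merged into one kernel-verified Lean document; each statement's English description precedes it below -/
import Mathlib

section
/- Approximation of an arbitrary multiple stopping strategy by a one-at-a-time strategy (Lemma A.1): for every τ = (τ_1,...,τ_N) ∈ T_p^N there exists τ̃ = (τ̃_1,...,τ̃_N) ∈ T̃_p^N such that max_{1 ≤ k ≤ N} |τ_k − τ̃_k| ≤ N almost surely. Equivalently, on the uniform time grid t_n = n·h the constructed tuple satisfies |τ − τ̃|_∞ ≤ N·h almost surely, where h is the grid step. -/
/-!
Approximation of an arbitrary multiple stopping strategy by a one-at-a-time strategy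
(Lemma A.1 of the paper).
-/

open MeasureTheory

namespace MultipleStopping

variable {Ω : Type*} {N : ℕ}

/-- The set `T_p^N` of `N`-tuples of `[p]`-valued `𝔽`-stopping times. -/
def StopSet [m0 : MeasurableSpace Ω] (ℱ : Filtration ℕ m0) (p : ℕ) :
    Set (Fin N → Ω → ℕ) :=
  { τ | ∀ k, IsStoppingTime ℱ (fun ω => ((τ k ω : ℕ) : WithTop ℕ)) ∧ ∀ ω, τ k ω ≤ p }

/-- The set `T̃_p^N` of tuples whose components never coincide unless they equal the
terminal time `p`. -/
def StopSetAlt [m0 : MeasurableSpace Ω] (ℱ : Filtration ℕ m0) (p : ℕ) :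
    Set (Fin N → Ω → ℕ) :=
  { τ | τ ∈ StopSet ℱ p ∧ ∀ k l, k ≠ l → ∀ ω, τ k ω = τ l ω → τ k ω = p }

end MultipleStopping

open MultipleStopping

namespace OneAtATimeAux

section Aux
variable {Ω : Type*} {N : ℕ}

/-- rank counter with the value of `τ k` replaced by a fixed `m`. -/
def rnkm (τ : Fin N → Ω → ℕ) (k : Fin N) (m : ℕ) (ω : Ω) : ℕ :=
  (Finset.univ.filter (fun l : Fin N => τ l ω * N + l.val < m * N + k.val)).card

def rnk (τ : Fin N → Ω → ℕ) (k : Fin N) (ω : Ω) : ℕ := rnkm τ k (τ k ω) ω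

def tweak (τ : Fin N → Ω → ℕ) (p : ℕ) (k : Fin N) (ω : Ω) : ℕ :=
  min (τ k ω + rnk τ k ω) p

lemma keylt {N : ℕ} (a b : ℕ) (l k : Fin N) :
    a * N + l.val < b * N + k.val ↔ a < b ∨ (a = b ∧ l.val < k.val) := by
  have hl := l.isLt
  have hk := k.isLt
  rcases lt_trichotomy a b with h|h|h
  · have h2 : a * N + N ≤ b * N := by
      have := Nat.mul_le_mul_right N (Nat.succ_le_of_lt h)
      simpa [Nat.succ_mul] using this
    constructor
    · intro _; exact Or.inl h
    · intro _; omega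
  · subst h; omega
  · have h2 : b * N + N ≤ a * N := by
      have := Nat.mul_le_mul_right N (Nat.succ_le_of_lt h)
      simpa [Nat.succ_mul] using this
    constructor
    · intro hlt; omega
    · rintro (h'|⟨h',_⟩) <;> omega

lemma rnk_lt (τ : Fin N → Ω → ℕ) (k l : Fin N) (ω : Ω)
    (h : τ k ω * N + k.val < τ l ω * N + l.val) :
    rnk τ k ω < rnk τ l ω := by
  simp only [rnk, rnkm]
  apply Finset.card_lt_card
  constructor
  · intro m hm
    simp only [Finset.mem_filter, Finset.mem_univ, true_and] at *
    exact lt_trans hm h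
  · intro hsub
    have hk : k ∈ Finset.univ.filter
        (fun m : Fin N => τ m ω * N + m.val < τ l ω * N + l.val) := by
      simp [h]
    have := hsub hk
    simp [rnk, rnkm] at this

lemma sum_inj_aux (τ : Fin N → Ω → ℕ) (k l : Fin N) (ω : Ω)
    (h' : τ k ω * N + k.val < τ l ω * N + l.val) :
    τ k ω + rnk τ k ω < τ l ω + rnk τ l ω := by
  have h1 := rnk_lt τ k l ω h'
  have h2 : τ k ω ≤ τ l ω := by
    rcases (keylt _ _ _ _).1 h' with h|⟨h,_⟩ <;> omega
  omega

lemma sum_inj (τ : Fin N → Ω → ℕ) (k l : Fin N) (ω : Ω) (hkl : k ≠ l)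
    (h : τ k ω + rnk τ k ω = τ l ω + rnk τ l ω) : False := by
  have hk := k.isLt; have hl := l.isLt
  have hne : τ k ω * N + k.val ≠ τ l ω * N + l.val := by
    intro he
    apply hkl
    have h2 : k.val % N = l.val % N := by
      have h1 := congrArg (fun t => t % N) he
      rwa [Nat.add_comm (τ k ω * N), Nat.add_comm (τ l ω * N),
        Nat.add_mul_mod_self_right, Nat.add_mul_mod_self_right] at h1
    have : k.val = l.val := by
      rwa [Nat.mod_eq_of_lt hk, Nat.mod_eq_of_lt hl] at h2
    exact Fin.ext this
  rcases lt_or_gt_of_ne hne with h'|h'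
  · have := sum_inj_aux τ k l ω h'; omega
  · have := sum_inj_aux τ l k ω h'; omega

lemma rnk_le (τ : Fin N → Ω → ℕ) (k : Fin N) (ω : Ω) : rnk τ k ω ≤ N :=
  by unfold rnk rnkm; exact (Finset.card_filter_le _ _).trans (by simp)

lemma tweak_isStoppingTime [m0 : MeasurableSpace Ω] (ℱ : Filtration ℕ m0)
    {p : ℕ} (τ : Fin N → Ω → ℕ)
    (hτ : ∀ k, IsStoppingTime ℱ (fun ω => ((τ k ω : ℕ) : WithTop ℕ)) ∧ ∀ ω, τ k ω ≤ p)
    (k : Fin N) : IsStoppingTime ℱ (fun ω => ((tweak τ p k ω : ℕ) : WithTop ℕ)) := by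
  intro n
  suffices hsuff : MeasurableSet[ℱ n] {ω | tweak τ p k ω ≤ n} by
    convert hsuff using 1; ext ω; simp
  by_cases hn : p ≤ n
  · have : {ω | tweak τ p k ω ≤ n} = Set.univ := by
      ext ω; simp only [Set.mem_setOf_eq, Set.mem_univ, iff_true, tweak]; omega
    rw [this]; exact MeasurableSet.univ
  · push_neg at hn
    have hset : {ω | tweak τ p k ω ≤ n} =
        ⋃ m : ℕ, ({ω | τ k ω = m} ∩ {ω | m ≤ n ∧ rnkm τ k m ω + m ≤ n}) := by
      ext ω
      simp only [Set.mem_setOf_eq, Set.mem_iUnion, Set.mem_inter_iff, tweak]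
      constructor
      · intro h
        have ha : τ k ω + rnk τ k ω ≤ n := by omega
        simp only [rnk] at ha
        exact ⟨τ k ω, rfl, by omega, by omega⟩
      · rintro ⟨m, hm, h1, h2⟩
        have : rnk τ k ω = rnkm τ k m ω := by rw [rnk, hm]
        omega
    rw [hset]
    refine MeasurableSet.iUnion fun m => ?_
    by_cases hm : m ≤ n
    · refine MeasurableSet.inter (ℱ.mono hm _ (by simpa using (hτ k).1.measurableSet_eq m)) ?_
      have hB : {ω | m ≤ n ∧ rnkm τ k m ω + m ≤ n}
          = (fun ω => rnkm τ k m ω) ⁻¹' {j | m ≤ n ∧ j + m ≤ n} := rfl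
      rw [hB]
      have hg : Measurable[ℱ n] (fun ω => rnkm τ k m ω) := by
        have hrepr : (fun ω => rnkm τ k m ω) =
            fun ω => ∑ l : Fin N,
              if τ l ω * N + l.val < m * N + k.val then 1 else 0 := by
          funext ω
          exact Finset.card_filter _ _
        rw [hrepr]
        refine Finset.measurable_sum _ fun l _ => ?_
        have hC : MeasurableSet[ℱ n] {ω | τ l ω * N + l.val < m * N + k.val} := by
          have heq : {ω | τ l ω * N + l.val < m * N + k.val}
              = {ω | τ l ω < m} ∪ {ω | τ l ω = m ∧ l.val < k.val} := by
            ext ω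
            simp only [Set.mem_setOf_eq, Set.mem_union]
            exact keylt (τ l ω) m l k
          rw [heq]
          refine MeasurableSet.union (ℱ.mono hm _ (by simpa using (hτ l).1.measurableSet_lt m)) ?_
          by_cases hlk : l.val < k.val
          · simpa [hlk] using ℱ.mono hm _ ((hτ l).1.measurableSet_eq m)
          · simp [hlk]
        have mc : ∀ c : ℕ, Measurable[ℱ n] (fun _ : Ω => c) :=
          fun c => @measurable_const ℕ Ω _ (ℱ n) c
        exact Measurable.ite hC (mc 1) (mc 0)
      exact hg (MeasurableSet.of_discrete)
    · have : ({ω | τ k ω = m} ∩ {ω | m ≤ n ∧ rnkm τ k m ω + m ≤ n}) = ∅ := by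
        ext ω; simp [hm]
      rw [this]; exact @MeasurableSet.empty _ (ℱ n)

end Aux

end OneAtATimeAux

open OneAtATimeAux in
/-- **Approximation of a multiple stopping strategy by a one-at-a-time strategy**
(Lemma A.1): for every `τ ∈ T_p^N` there exists `τ̃ ∈ T̃_p^N` with
`max_k |τ_k − τ̃_k| ≤ N` almost surely; equivalently, on the uniform grid `t_n = n·h`
the corresponding grid times satisfy `|τ − τ̃|_∞ ≤ N·h` almost surely. -/
theorem exists_one_at_a_time_approximation
    {Ω : Type*} [m0 : MeasurableSpace Ω] (P : Measure Ω) [IsProbabilityMeasure P]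
    {N : ℕ} (hN : 1 ≤ N) {p : ℕ} (hp : 1 ≤ p)
    (ℱ : Filtration ℕ m0) (hFiltr : (ℱ p : MeasurableSpace Ω) = m0)
    (τ : Fin N → Ω → ℕ) (hτ : τ ∈ StopSet (N := N) ℱ p) :
    ∃ τ' ∈ StopSetAlt (N := N) ℱ p,
      ∀ᵐ ω ∂P, ∀ k, |(τ k ω : ℤ) - (τ' k ω : ℤ)| ≤ N ∧
        ∀ h : ℝ, 0 ≤ h → |(τ k ω : ℝ) * h - (τ' k ω : ℝ) * h| ≤ N * h := by
  classical
  have hτ' : ∀ k, IsStoppingTime ℱ (fun ω => ((τ k ω : ℕ) : WithTop ℕ)) ∧ ∀ ω, τ k ω ≤ p := hτ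
  refine ⟨tweak τ p, ⟨fun k => ⟨tweak_isStoppingTime ℱ τ hτ' k,
      fun ω => min_le_right _ _⟩, ?_⟩, ?_⟩
  · -- distinctness
    intro k l hkl ω heq
    by_contra hne
    have h1 : min (τ k ω + rnk τ k ω) p < p :=
      lt_of_le_of_ne (min_le_right _ _) hne
    have ha : τ k ω + rnk τ k ω = τ l ω + rnk τ l ω := by
      simp only [tweak] at heq h1
      omega
    exact sum_inj τ k l ω hkl ha
  · -- a.s. bound (in fact pointwise)
    refine Filter.Eventually.of_forall fun ω k => ?_
    have hle : τ k ω ≤ tweak τ p k ω :=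
      le_min (Nat.le_add_right _ _) ((hτ' k).2 ω)
    have hub : tweak τ p k ω ≤ τ k ω + N := by
      have h2 := rnk_le τ k ω
      have h3 : tweak τ p k ω ≤ τ k ω + rnk τ k ω := min_le_left _ _
      omega
    have hZ : |(τ k ω : ℤ) - (tweak τ p k ω : ℤ)| ≤ N := by
      rw [abs_le]; constructor <;> omega
    refine ⟨hZ, fun h hh => ?_⟩
    have hR : |(τ k ω : ℝ) - (tweak τ p k ω : ℝ)| ≤ (N : ℝ) := by
      exact_mod_cast hZ
    calc |(τ k ω : ℝ) * h - (tweak τ p k ω : ℝ) * h|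
        = |(τ k ω : ℝ) - (tweak τ p k ω : ℝ)| * |h| := by rw [← sub_mul, abs_mul]
      _ ≤ N * h := by
          rw [abs_of_nonneg hh]
          exact mul_le_mul_of_nonneg_right hR hh
end

section
/- Queueing bound underlying Lemma A.1: let N ≥ 1, p ≥ 0, and let A_0, A_1, ..., A_p be pairwise disjoint subsets of {1,...,N}. Define finite sets J_0 := A_0 and, for 1 ≤ n ≤ p, J_n := (J_{n−1} \ {min J_{n−1}}) ∪ A_n if J_{n−1} ≠ ∅, and J_n := A_n if J_{n−1} = ∅ (at each step the smallest element present is removed and the new arrivals A_n are added). Then for every k ∈ {1,...,N}, the number of indices n ∈ {0,...,p} with k ∈ J_n is at most N; in particular every element that ever enters the set leaves it within N steps. -/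
/-!
Queueing bound underlying Lemma A.1: at each step the smallest element present is
removed and the new arrivals are added; every element spends at most `N` steps in
the system.
-/

namespace MultipleStopping

variable {N : ℕ}

/-- The queue process: `J_0 = A_0` and, for `n ≥ 1`,
`J_n = (J_{n-1} \ {min J_{n-1}}) ∪ A_n` if `J_{n-1} ≠ ∅`, and `J_n = A_n` otherwise. -/
def queue (A : ℕ → Finset (Fin N)) : ℕ → Finset (Fin N)
  | 0 => A 0
  | n + 1 =>
      if h : (queue A n).Nonempty then
        ((queue A n).erase ((queue A n).min' h)) ∪ A (n + 1)
      else A (n + 1)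

end MultipleStopping

open MultipleStopping

namespace QueueAux

variable {N : ℕ}

lemma mem_queue_succ {A : ℕ → Finset (Fin N)} {k : Fin N} {n : ℕ}
    (h : k ∈ queue A (n + 1)) : k ∈ queue A n ∨ k ∈ A (n + 1) := by
  rw [queue] at h
  split at h
  · rcases Finset.mem_union.mp h with h | h
    · exact Or.inl (Finset.mem_of_mem_erase h)
    · exact Or.inr h
  · exact Or.inr h

lemma exists_arrival {A : ℕ → Finset (Fin N)} {k : Fin N} :
    ∀ {n : ℕ}, k ∈ queue A n → ∃ j ≤ n, k ∈ A j := by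
  intro n
  induction n with
  | zero => intro h; exact ⟨0, le_refl 0, h⟩
  | succ n ih =>
    intro h
    rcases mem_queue_succ h with h | h
    · obtain ⟨j, hj, hk⟩ := ih h
      exact ⟨j, hj.trans (Nat.le_succ n), hk⟩
    · exact ⟨n + 1, le_refl _, h⟩

lemma stay_out {A : ℕ → Finset (Fin N)}
    (hdisj : ∀ m n, m ≠ n → Disjoint (A m) (A n))
    {k : Fin N} {n m : ℕ} (hin : k ∈ queue A n) (hnm : n < m)
    (hout : k ∉ queue A m) : ∀ t, m ≤ t → k ∉ queue A t := by
  obtain ⟨j, hj, hkj⟩ := exists_arrival hin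
  intro t ht
  induction t, ht using Nat.le_induction with
  | base => exact hout
  | succ t ht ih =>
    intro hk
    rcases mem_queue_succ hk with h | h
    · exact ih h
    · exact (Finset.disjoint_left.mp (hdisj j (t + 1) (by omega)) hkj) h

lemma min_notMem_succ {A : ℕ → Finset (Fin N)}
    (hdisj : ∀ m n, m ≠ n → Disjoint (A m) (A n))
    {n : ℕ} (h : (queue A n).Nonempty) :
    (queue A n).min' h ∉ queue A (n + 1) := by
  obtain ⟨j, hj, hkj⟩ := exists_arrival ((queue A n).min'_mem h)
  rw [queue, dif_pos h]
  intro hk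
  rcases Finset.mem_union.mp hk with hk | hk
  · exact (Finset.notMem_erase _ _) hk
  · exact (Finset.disjoint_left.mp (hdisj j (n + 1) (by omega)) hkj) hk

lemma leaves {A : ℕ → Finset (Fin N)}
    (hdisj : ∀ m n, m ≠ n → Disjoint (A m) (A n))
    {k : Fin N} {n : ℕ} (hk : k ∈ queue A n) :
    ∃ m, n < m ∧ m ≤ n + N ∧ k ∉ queue A m := by
  by_contra hcon
  push_neg at hcon
  have hall : ∀ i ≤ N, k ∈ queue A (n + i) := by
    intro i hi
    rcases Nat.eq_zero_or_pos i with rfl | hpos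
    · simpa using hk
    · exact hcon (n + i) (by omega) (by omega)
  have hne : ∀ i, i ≤ N → (queue A (n + i)).Nonempty := fun i hi => ⟨k, hall i hi⟩
  set g : ℕ → Fin N := fun i =>
    if h : (queue A (n + i)).Nonempty then (queue A (n + i)).min' h else k with hg
  have hgout : ∀ i < N, ∀ t, n + i < t → g i ∉ queue A t := by
    intro i hi t ht
    have hne' := hne i (le_of_lt hi)
    have hmem : g i ∈ queue A (n + i) := by
      simp only [hg, dif_pos hne']
      exact Finset.min'_mem _ _
    have hout : g i ∉ queue A (n + i + 1) := by
      simp only [hg, dif_pos hne']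
      exact min_notMem_succ hdisj hne'
    exact stay_out hdisj hmem (by omega) hout t (by omega)
  have hginj : Set.InjOn g (Finset.range N) := by
    intro i hi j hj hij
    simp only [Finset.coe_range, Set.mem_Iio] at hi hj
    by_contra hne'
    rcases Nat.lt_or_ge i j with h | h
    · have hmemj : g j ∈ queue A (n + j) := by
        simp only [hg, dif_pos (hne j (le_of_lt hj))]
        exact Finset.min'_mem _ _
      exact hgout i hi (n + j) (by omega) (hij ▸ hmemj)
    · have h' : j < i := by omega
      have hmemi : g i ∈ queue A (n + i) := by
        simp only [hg, dif_pos (hne i (le_of_lt hi))]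
        exact Finset.min'_mem _ _
      exact hgout j hj (n + i) (by omega) (hij ▸ hmemi)
  have hknotim : k ∉ (Finset.range N).image g := by
    intro hmem
    obtain ⟨i, hi, hgi⟩ := Finset.mem_image.mp hmem
    have hi' := Finset.mem_range.mp hi
    exact hgout i hi' (n + N) (by omega) (hgi ▸ hall N le_rfl)
  have hcard : (insert k ((Finset.range N).image g)).card = N + 1 := by
    rw [Finset.card_insert_of_notMem hknotim, Finset.card_image_of_injOn hginj,
      Finset.card_range]
  have hle : (insert k ((Finset.range N).image g)).card ≤ N := by
    have := Finset.card_le_univ (insert k ((Finset.range N).image g))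
    simpa using this
  omega

end QueueAux

/-- **Queueing bound** (underlying Lemma A.1): if the arrival sets
`A_0, …, A_p ⊆ {1,…,N}` are pairwise disjoint, then every `k` belongs to at most `N`
of the sets `J_0, …, J_p`; in particular every element that ever enters the queue
leaves it within `N` steps. -/
theorem queue_occupation_le
    {N : ℕ} (hN : 1 ≤ N) (p : ℕ) (A : ℕ → Finset (Fin N))
    (hdisj : ∀ m n, m ≠ n → Disjoint (A m) (A n)) :
    (∀ k : Fin N, ((Finset.range (p + 1)).filter fun n => k ∈ queue A n).card ≤ N) ∧
    (∀ (k : Fin N) (n : ℕ), k ∈ queue A n → ∃ m, n < m ∧ m ≤ n + N ∧ k ∉ queue A m) := by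
  constructor
  · intro k
    set s := (Finset.range (p + 1)).filter (fun n => k ∈ queue A n) with hs
    rcases s.eq_empty_or_nonempty with he | hne
    · simp [he]
    · set a := s.min' hne with ha
      have hak : k ∈ queue A a := (Finset.mem_filter.mp (s.min'_mem hne)).2
      obtain ⟨m, ham, hmN, hout⟩ := QueueAux.leaves hdisj hak
      have hsub : s ⊆ Finset.Ico a m := by
        intro x hx
        have h1 : a ≤ x := s.min'_le x hx
        have h2 : k ∈ queue A x := (Finset.mem_filter.mp hx).2
        have h3 : x < m := by
          by_contra h
          exact QueueAux.stay_out hdisj hak ham hout x (by omega) h2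
        exact Finset.mem_Ico.mpr ⟨h1, h3⟩
      calc s.card ≤ (Finset.Ico a m).card := Finset.card_le_card hsub
        _ = m - a := Nat.card_Ico a m
        _ ≤ N := by omega
  · intro k n hk
    exact QueueAux.leaves hdisj hk
end
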